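/- arXiv:2406.08939 — 2 statements merged into one kernel-verified Lean document; each statement's English description precedes it below -/
import Mathlib

section
/- Let χ be a primitive Dirichlet character modulo p^n of p-power order. Since 2(n−n₀) ≥ n, the map b ↦ χ(1 + p^{n−n₀} b) is a well-defined homomorphism from (ℤ/p^{n₀}ℤ, +) to ℂ^×, and there exists a unique element c_χ ∈ ℤ/p^{n₀}ℤ such that χ(1 + p^{n−n₀} b) = e(b·c_χ/p^{n₀}) for all integers b; moreover, because χ is primitive, c_χ is a unit in ℤ/p^{n₀}ℤ. -/
/-!
With `t = p ^ (n - n₀)` we have `t * t = 0` and `t * p ^ n₀ = 0` in `ZMod (p ^ n)`, so `b ↦ 1 + t b`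
is a homomorphism from `ZMod (p ^ n₀)` to the multiplicative monoid and `b ↦ χ (1 + t b)` is an
additive character of `ZMod (p ^ n₀)`. The standard character `b ↦ e (b / p ^ n₀)` is primitive, so
its multiplicative shifts are all `p ^ n₀` characters, each exactly once. If the shift `c` were
divisible by `p`, then `χ` would be trivial on `1 + p ^ (n - 1) ℤ`, hence factor through
`p ^ (n - 1)`, contradicting primitivity.
-/

open Complex

noncomputable def e (x : ℚ) : ℂ := Complex.exp (2 * Real.pi * Complex.I * x)

namespace AddChar

variable {A R : Type*} [AddMonoid A] [CommRing R]

def oneAdd (φ : A →+ R) (hφ : ∀ a b, φ a * φ b = 0) : AddChar A R where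
  toFun a := 1 + φ a
  map_zero_eq_one' := by simp
  map_add_eq_mul' a b := by rw [map_add]; linear_combination -(hφ a b)

@[simp]
lemma oneAdd_apply (φ : A →+ R) (hφ : ∀ a b, φ a * φ b = 0) (a : A) :
    oneAdd φ hφ a = 1 + φ a := rfl

end AddChar

namespace ZMod

variable {M : ℕ} {R : Type*} [CommRing R]

def liftMulLeft (t : R) (ht : t * M = 0) : ZMod M →+ R :=
  lift M ⟨(AddMonoidHom.mulLeft t).comp (Int.castAddHom R), by simpa using ht⟩

@[simp]
lemma liftMulLeft_intCast (t : R) (ht : t * M = 0) (b : ℤ) : liftMulLeft t ht b = t * b :=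
  lift_coe _ _ _

lemma liftMulLeft_mul_liftMulLeft {t : R} (htt : t * t = 0) (ht : t * M = 0) (a b : ZMod M) :
    liftMulLeft t ht a * liftMulLeft t ht b = 0 := by
  obtain ⟨a, rfl⟩ := intCast_surjective a
  obtain ⟨b, rfl⟩ := intCast_surjective b
  simp only [liftMulLeft_intCast]
  linear_combination (a * b : R) * htt

lemma mul_pow_pred_eq_zero_of_not_isUnit {p k : ℕ} (hp : p.Prime) {c : ZMod (p ^ k)}
    (hc : ¬IsUnit c) : c * p ^ (k - 1) = 0 := by
  obtain _ | k := k
  · have : Subsingleton (ZMod (p ^ 0)) := subsingleton_iff.2 (pow_zero p)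
    exact Subsingleton.elim _ _
  have : NeZero (p ^ (k + 1)) := ⟨pow_ne_zero _ hp.ne_zero⟩
  obtain ⟨m, hm⟩ : p ∣ c.val := by
    by_contra hpc
    rw [← natCast_zmod_val c, isUnit_iff_coprime] at hc
    exact hc (((hp.coprime_iff_not_dvd).2 hpc).symm.pow_right _)
  rw [← natCast_zmod_val c, hm, Nat.add_sub_cancel, Nat.cast_mul, mul_right_comm, ← pow_succ',
    natCast_pow_eq_zero_of_le p le_rfl, zero_mul]

end ZMod

namespace MulChar

variable {M : ℕ} {R S : Type*} [CommRing R] [CommMonoidWithZero S]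

noncomputable def compOneAddMul (χ : MulChar R S) (t : R) (htt : t * t = 0) (ht : t * M = 0) :
    AddChar (ZMod M) S :=
  χ.toMonoidHom.compAddChar
    (AddChar.oneAdd (ZMod.liftMulLeft t ht) (ZMod.liftMulLeft_mul_liftMulLeft htt ht))

@[simp]
lemma compOneAddMul_intCast (χ : MulChar R S) {t : R} (htt : t * t = 0) (ht : t * M = 0) (b : ℤ) :
    χ.compOneAddMul t htt ht b = χ (1 + t * b) := by
  simp [compOneAddMul]

end MulChar

lemma e_intCast_div (N : ℕ) [NeZero N] (j : ℤ) : e (j / N) = ZMod.stdAddChar (j : ZMod N) := by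
  rw [ZMod.stdAddChar_coe, e]
  push_cast
  ring_nf

namespace ZMod

variable {N : ℕ} [NeZero N]

lemma mulShift_stdAddChar_intCast (c : ZMod N) (b : ℤ) :
    stdAddChar.mulShift c b = e (b * c.val / N) := by
  rw [AddChar.mulShift_apply, show (b * c.val : ℚ) = ((b * c.val : ℤ) : ℚ) by push_cast; rfl,
    e_intCast_div]
  push_cast
  rw [natCast_val, cast_id', id, mul_comm]

lemma eq_mulShift_stdAddChar_iff (ψ : AddChar (ZMod N) ℂ) (c : ZMod N) :
    ψ = stdAddChar.mulShift c ↔ ∀ b : ℤ, ψ b = e (b * c.val / N) := by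
  simp only [← mulShift_stdAddChar_intCast]
  refine ⟨fun h b ↦ by rw [h], fun h ↦ AddChar.ext _ _ fun x ↦ ?_⟩
  obtain ⟨b, rfl⟩ := intCast_surjective x
  exact h b

lemma existsUnique_eq_mulShift_stdAddChar (ψ : AddChar (ZMod N) ℂ) :
    ∃! c : ZMod N, ψ = stdAddChar.mulShift c := by
  have hbij : Function.Bijective (stdAddChar (N := N)).mulShift :=
    (Fintype.bijective_iff_injective_and_card _).2
      ⟨AddChar.to_mulShift_inj_of_isPrimitive (isPrimitive_stdAddChar N), by simp⟩
  simpa only [eq_comm] using hbij.existsUnique ψ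

end ZMod

namespace DirichletCharacter

variable {R : Type*} [CommMonoidWithZero R] {N d : ℕ} (χ : DirichletCharacter R N)

lemma factorsThrough_of_forall_one_add_mul [NeZero N] (hd : d ∣ N)
    (h : ∀ s : ℤ, χ (1 + d * s) = 1) : χ.FactorsThrough d := by
  rw [factorsThrough_iff_ker_unitsMap hd]
  intro u hu
  obtain ⟨a, ha⟩ := ZMod.intCast_surjective (u : ZMod N)
  have had : ((a : ZMod d)) = ((1 : ℤ) : ZMod d) := by
    rw [MonoidHom.mem_ker] at hu
    simpa [ZMod.unitsMap_def, ← ha] using congrArg Units.val hu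
  obtain ⟨s, hs⟩ := (ZMod.intCast_eq_intCast_iff_dvd_sub _ _ _).1 had
  rw [MonoidHom.mem_ker, Units.ext_iff, MulChar.coe_toUnitHom, ← ha, show a = 1 + d * (-s) by linarith]
  simpa using h (-s)

lemma IsPrimitive.le_of_factorsThrough {χ : DirichletCharacter R N} (hχ : χ.IsPrimitive)
    (h : χ.FactorsThrough d) : N ≤ d :=
  hχ ▸ Nat.sInf_le h

end DirichletCharacter

namespace DirichletCharacter

lemma IsPrimitive.isUnit_of_apply_one_add_pow_mul {p n n₀ : ℕ} (hp : p.Prime) (hn₀ : 0 < n₀)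
    (hn : n₀ < n) [NeZero (p ^ n₀)] {χ : DirichletCharacter ℂ (p ^ n)} (hχ : χ.IsPrimitive)
    {c : ZMod (p ^ n₀)}
    (hc : ∀ b : ℤ, χ (1 + (p : ZMod (p ^ n)) ^ (n - n₀) * b) = ZMod.stdAddChar.mulShift c b) :
    IsUnit c := by
  have : NeZero (p ^ n) := ⟨pow_ne_zero _ hp.ne_zero⟩
  by_contra hcu
  have hc0 := ZMod.mul_pow_pred_eq_zero_of_not_isUnit hp hcu
  have hft : χ.FactorsThrough (p ^ (n - 1)) :=
    χ.factorsThrough_of_forall_one_add_mul (pow_dvd_pow p (n.sub_le 1)) fun s ↦ by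
      have hs : ((p ^ (n - 1) : ℕ) : ZMod (p ^ n)) * s =
          (p : ZMod (p ^ n)) ^ (n - n₀) * ((p ^ (n₀ - 1) * s : ℤ) : ZMod (p ^ n)) := by
        push_cast
        rw [← mul_assoc, ← pow_add, show n - n₀ + (n₀ - 1) = n - 1 by omega]
      rw [hs, hc, AddChar.mulShift_apply]
      push_cast
      rw [← mul_assoc, hc0, zero_mul, AddChar.map_zero_eq_one]
  exact (hχ.le_of_factorsThrough hft).not_gt (Nat.pow_lt_pow_right hp.one_lt (by omega))

end DirichletCharacter

theorem stmt_0_general (p n n₀ : ℕ) (hp : p.Prime)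
    (hn₀ : 0 < n₀) (hn : 2 * n₀ ≤ n)
    (χ : DirichletCharacter ℂ (p ^ n)) (hprim : χ.IsPrimitive) :
    (∀ b₁ b₂ : ℤ, (b₁ : ZMod (p ^ n₀)) = (b₂ : ZMod (p ^ n₀)) →
      χ (1 + (p : ZMod (p ^ n)) ^ (n - n₀) * b₁) = χ (1 + (p : ZMod (p ^ n)) ^ (n - n₀) * b₂)) ∧
    (∀ b₁ b₂ : ℤ, χ (1 + (p : ZMod (p ^ n)) ^ (n - n₀) * (b₁ + b₂)) =
      χ (1 + (p : ZMod (p ^ n)) ^ (n - n₀) * b₁) * χ (1 + (p : ZMod (p ^ n)) ^ (n - n₀) * b₂)) ∧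
    (∃! c : ZMod (p ^ n₀), ∀ b : ℤ,
      χ (1 + (p : ZMod (p ^ n)) ^ (n - n₀) * b) = e ((b * c.val : ℚ) / (p ^ n₀ : ℚ))) ∧
    (∀ c : ZMod (p ^ n₀),
      (∀ b : ℤ, χ (1 + (p : ZMod (p ^ n)) ^ (n - n₀) * b) = e ((b * c.val : ℚ) / (p ^ n₀ : ℚ))) →
      IsUnit c) := by
  have : NeZero (p ^ n₀) := ⟨pow_ne_zero _ hp.ne_zero⟩
  set t := (p : ZMod (p ^ n)) ^ (n - n₀)
  have htt : t * t = 0 := by rw [← pow_add]; exact ZMod.natCast_pow_eq_zero_of_le p (by omega)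
  have ht : t * ((p ^ n₀ : ℕ) : ZMod (p ^ n)) = 0 := by
    rw [Nat.cast_pow, ← pow_add]; exact ZMod.natCast_pow_eq_zero_of_le p (by omega)
  set ψ := χ.compOneAddMul t htt ht
  have hψ (b : ℤ) : χ (1 + t * b) = ψ b := (χ.compOneAddMul_intCast htt ht b).symm
  have hψc (c : ZMod (p ^ n₀)) : (∀ b : ℤ, χ (1 + t * b) = e ((b * c.val : ℚ) / (p ^ n₀ : ℚ))) ↔
      ψ = ZMod.stdAddChar.mulShift c := by
    simp_rw [hψ, ZMod.eq_mulShift_stdAddChar_iff, Nat.cast_pow]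
  refine ⟨fun b₁ b₂ h ↦ by rw [hψ, hψ, h], fun b₁ b₂ ↦ ?_, ?_, fun c hc ↦ ?_⟩
  · rw [← Int.cast_add, hψ, hψ, hψ, Int.cast_add, AddChar.map_add_eq_mul]
  · simp_rw [hψc]
    exact ZMod.existsUnique_eq_mulShift_stdAddChar ψ
  · exact DirichletCharacter.IsPrimitive.isUnit_of_apply_one_add_pow_mul hp hn₀ (by omega) hprim
      fun b ↦ by rw [hψ, (hψc c).1 hc]

/-- for a primitive Dirichlet character `χ` modulo `p^n` of `p`-power order
(`p` odd, `n ≥ 2n₀`), the map `b ↦ χ(1 + p^{n−n₀} b)` is a well-defined homomorphism from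
`(ℤ/p^{n₀}ℤ, +)` to `ℂ^×`, there is a unique `c_χ ∈ ℤ/p^{n₀}ℤ` with
`χ(1 + p^{n−n₀} b) = e(b c_χ / p^{n₀})` for all integers `b`, and `c_χ` is a unit. -/
theorem stmt_0 (p n n₀ : ℕ) (hp : p.Prime) (hodd : Odd p)
    (hn₀ : 0 < n₀) (hn : 2 * n₀ ≤ n)
    (χ : DirichletCharacter ℂ (p ^ n)) (hprim : χ.IsPrimitive)
    (hord : ∃ k : ℕ, orderOf χ = p ^ k) :
    (∀ b₁ b₂ : ℤ, (b₁ : ZMod (p ^ n₀)) = (b₂ : ZMod (p ^ n₀)) →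
      χ (1 + (p : ZMod (p ^ n)) ^ (n - n₀) * b₁) = χ (1 + (p : ZMod (p ^ n)) ^ (n - n₀) * b₂)) ∧
    (∀ b₁ b₂ : ℤ, χ (1 + (p : ZMod (p ^ n)) ^ (n - n₀) * (b₁ + b₂)) =
      χ (1 + (p : ZMod (p ^ n)) ^ (n - n₀) * b₁) * χ (1 + (p : ZMod (p ^ n)) ^ (n - n₀) * b₂)) ∧
    (∃! c : ZMod (p ^ n₀), ∀ b : ℤ,
      χ (1 + (p : ZMod (p ^ n)) ^ (n - n₀) * b) = e ((b * c.val : ℚ) / (p ^ n₀ : ℚ))) ∧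
    (∀ c : ZMod (p ^ n₀),
      (∀ b : ℤ, χ (1 + (p : ZMod (p ^ n)) ^ (n - n₀) * b) = e ((b * c.val : ℚ) / (p ^ n₀ : ℚ))) →
      IsUnit c) :=
  stmt_0_general p n n₀ hp hn₀ hn χ hprim
end

section
/- For all units c, d ∈ (ℤ/p^nℤ)^×, the partial Kloosterman-type sum satisfies |(1/p^n)·Σ_{a ∈ (ℤ/p^nℤ)^×, a ≡ c mod p^{n₀}} e((a + a^{−1}d)/p^n)| ≤ p^{2 − n/2}, where a^{−1} denotes the inverse of a in (ℤ/p^nℤ)^×. -/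
/-!
Put `k = n - ⌊n/2⌋`, so that `(p^k)² = 0` in `ℤ/p^n`. The summation set is stable under
`x ↦ x + p^k u` (as `n₀ ≤ k`), and for a unit `x` one has `(x + p^k u)⁻¹ = x⁻¹ - x⁻² p^k u`, so the
phase `x + x⁻¹ d` only acquires the linear term `u · p^k (1 - x⁻² d)`. Averaging over `u` with a
primitive additive character kills every `x` except those with `p^k (1 - x⁻² d) = 0`, i.e.
`x² ≡ d mod p^⌊n/2⌋`. As `p` is odd, `ℤ/p^⌊n/2⌋` is a local ring in which `2` is a unit, so `d` has
at most two square roots there, each with `p^k` lifts. Hence the sum has modulus at most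
`2 p^k`, and `2 p^(k - n) = 2 p^(-⌊n/2⌋) ≤ p^(2 - n/2)`.
-/

open Complex

open Finset

lemma e_val_div_eq_stdAddChar {N : ℕ} [NeZero N] (x : ZMod N) :
    e ((x.val : ℚ) / (N : ℚ)) = ZMod.stdAddChar x := by
  rw [ZMod.stdAddChar_apply, ZMod.toCircle_apply, e]
  push_cast
  ring_nf

lemma Finset.sum_filter_units {M β : Type*} [Monoid M] [Fintype M] [Fintype Mˣ]
    [AddCommMonoid β] (P : M → Prop) [DecidablePred P] [DecidablePred (IsUnit : M → Prop)]
    (f : M → β) :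
    ∑ a ∈ univ.filter (fun a : Mˣ => P a), f a =
      ∑ x ∈ univ.filter (fun x => IsUnit x ∧ P x), f x := by
  refine sum_bij (fun a _ => (a : M)) ?_ (fun _ _ _ _ => Units.ext) ?_ (fun _ _ => rfl)
  · intro a ha
    simp_all
  · intro x hx
    simp only [mem_filter, mem_univ, true_and] at hx ⊢
    exact ⟨hx.1.unit, hx.2, rfl⟩

lemma IsNilpotent.isUnit_add_left_iff {R : Type*} [CommRing R] {r x : R} (hr : IsNilpotent r) :
    IsUnit (x + r) ↔ IsUnit x :=
  ⟨fun h => by simpa using hr.neg.isUnit_add_left_of_commute h (Commute.all _ _),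
    fun h => hr.isUnit_add_left_of_commute h (Commute.all _ _)⟩

lemma ZMod.inv_add_of_mul_self_eq_zero {N : ℕ} {x s : ZMod N} (hx : IsUnit x) (hs : s * s = 0) :
    (x + s)⁻¹ = x⁻¹ - x⁻¹ ^ 2 * s :=
  ZMod.inv_eq_of_mul_eq_one _ _ _ <| by
    linear_combination (1 - x⁻¹ * s) * ZMod.mul_inv_of_unit x hx - x⁻¹ ^ 2 * hs

lemma AddChar.sum_eq_sum_filter_of_map_add_mul {R : Type*} [CommRing R] [Fintype R]
    [DecidableEq R] {ψ : AddChar R ℂ} (hψ : ψ.IsPrimitive) {A : Finset R} {t : R}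
    (hA : ∀ x u, x + t * u ∈ A ↔ x ∈ A) {g : R → ℂ} {w : R → R}
    (hg : ∀ x ∈ A, ∀ u, g (x + t * u) = g x * ψ (u * w x)) :
    ∑ x ∈ A, g x = ∑ x ∈ A with w x = 0, g x := by
  have hshift (u : R) : ∑ x ∈ A, g (x + t * u) = ∑ x ∈ A, g x :=
    sum_equiv (Equiv.addRight (t * u)) (fun x => (hA x u).symm) (fun _ _ => rfl)
  have hcard : (Fintype.card R : ℂ) ≠ 0 := Nat.cast_ne_zero.mpr Fintype.card_ne_zero
  refine mul_left_cancel₀ hcard ?_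
  calc (Fintype.card R : ℂ) * ∑ x ∈ A, g x = ∑ u : R, ∑ x ∈ A, g (x + t * u) := by
        simp [hshift]
    _ = ∑ x ∈ A, g x * ∑ u : R, ψ (u * w x) := by
        rw [sum_comm]
        exact sum_congr rfl fun x hx => by rw [mul_sum]; exact sum_congr rfl fun u _ => hg x hx u
    _ = (Fintype.card R : ℂ) * ∑ x ∈ A with w x = 0, g x := by
        simp_rw [AddChar.sum_mulShift _ hψ, sum_filter, mul_sum]
        exact sum_congr rfl fun x _ => by split_ifs <;> ring

lemma ZMod.sum_addChar_add_inv_mul_eq_sum_filter {N : ℕ} [NeZero N] {ψ : AddChar (ZMod N) ℂ}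
    (hψ : ψ.IsPrimitive) {A : Finset (ZMod N)} {t : ZMod N} (d : ZMod N) (htt : t * t = 0)
    (hunit : ∀ x ∈ A, IsUnit x) (hA : ∀ x u, x + t * u ∈ A ↔ x ∈ A) :
    ∑ x ∈ A, ψ (x + x⁻¹ * d) = ∑ x ∈ A with t * (1 - x⁻¹ ^ 2 * d) = 0, ψ (x + x⁻¹ * d) :=
  AddChar.sum_eq_sum_filter_of_map_add_mul hψ hA fun x hx u => by
    rw [ZMod.inv_add_of_mul_self_eq_zero (hunit x hx) (by linear_combination u ^ 2 * htt),
      ← AddChar.map_add_eq_mul]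
    ring_nf

lemma ZMod.natCast_mul_eq_zero_iff_castHom {a b N : ℕ} [NeZero N] (ha : a ≠ 0) (h : a * b = N)
    (x : ZMod N) : (a : ZMod N) * x = 0 ↔ ZMod.castHom (Dvd.intro_left a h) (ZMod b) x = 0 := by
  subst h
  rw [← ZMod.natCast_zmod_val x, map_natCast, ← Nat.cast_mul, ZMod.natCast_eq_zero_iff,
    ZMod.natCast_eq_zero_iff, Nat.mul_dvd_mul_iff_left (Nat.pos_of_ne_zero ha)]

lemma ZMod.castHom_mul_self_eq_of_natCast_mul_eq_zero {a b N : ℕ} [NeZero N] (ha : a ≠ 0)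
    (h : a * b = N) {x d : ZMod N} (hx : IsUnit x) (hxd : (a : ZMod N) * (1 - x⁻¹ ^ 2 * d) = 0) :
    castHom (Dvd.intro_left a h) (ZMod b) x * castHom (Dvd.intro_left a h) (ZMod b) x =
      castHom (Dvd.intro_left a h) (ZMod b) d := by
  set π := castHom (Dvd.intro_left a h) (ZMod b)
  have h0 := (ZMod.natCast_mul_eq_zero_iff_castHom ha h _).mp hxd
  have hinv : π x * π x⁻¹ = 1 := by rw [← map_mul, ZMod.mul_inv_of_unit x hx, map_one]
  simp only [map_sub, map_mul, map_pow, map_one] at h0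
  linear_combination (π x) ^ 2 * h0 + π d * (π x * π x⁻¹ + 1) * hinv

lemma IsLocalRing.card_filter_mul_self_eq_le_two {R : Type*} [CommRing R] [IsLocalRing R]
    [Fintype R] [DecidableEq R] (h2 : IsUnit (2 : R)) {t : R} (ht : IsUnit t) :
    #{y : R | y * y = t} ≤ 2 := by
  rcases eq_empty_or_nonempty {y : R | y * y = t} with hempty | ⟨y₀, hy₀⟩
  · simp [hempty]
  rw [mem_filter_univ] at hy₀
  refine (card_le_card (t := {y₀, -y₀}) fun y hy => ?_).trans card_le_two
  rw [mem_filter_univ] at hy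
  have hyu : IsUnit y := isUnit_of_mul_isUnit_left (hy ▸ ht)
  have hprod : (y - y₀) * (y + y₀) = 0 := by linear_combination hy - hy₀
  have hsum : IsUnit ((y - y₀) + (y + y₀)) := by
    rw [show (y - y₀) + (y + y₀) = 2 * y by ring]
    exact h2.mul hyu
  simp only [mem_insert, mem_singleton]
  rcases isUnit_or_isUnit_of_isUnit_add hsum with hu | hu
  · right
    linear_combination hu.mul_right_eq_zero.mp hprod
  · left
    linear_combination hu.mul_left_eq_zero.mp hprod

lemma ZMod.isLocalRing_prime_pow (p : ℕ) [Fact p.Prime] {k : ℕ} (hk : k ≠ 0) :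
    IsLocalRing (ZMod (p ^ k)) :=
  haveI : Fact (1 < p ^ k) := ⟨Nat.one_lt_pow hk (Fact.out : p.Prime).one_lt⟩
  IsLocalRing.of_surjective' (PadicInt.toZModPow k : ℤ_[p] →+* _) (ZMod.ringHom_surjective _)

lemma ZMod.card_filter_mul_self_eq_le_two {p : ℕ} [Fact p.Prime] (hodd : Odd p) {m : ℕ}
    {t : ZMod (p ^ m)} (ht : IsUnit t) : #{y : ZMod (p ^ m) | y * y = t} ≤ 2 := by
  rcases eq_or_ne m 0 with rfl | hm
  · exact (card_filter_le _ _).trans (by rw [card_univ, ZMod.card, pow_zero]; norm_num)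
  have := ZMod.isLocalRing_prime_pow p hm
  refine IsLocalRing.card_filter_mul_self_eq_le_two ?_ ht
  exact_mod_cast (ZMod.isUnit_iff_coprime 2 (p ^ m)).mpr
    ((Nat.coprime_two_left.mpr hodd).pow_right m)

lemma AddMonoidHom.card_filter_mem_mul_card {G H F : Type*} [AddGroup G] [Fintype G] [AddGroup H]
    [Fintype H] [DecidableEq H] [FunLike F G H] [AddMonoidHomClass F G H] (f : F)
    (hf : Function.Surjective f) (s : Finset H) :
    #{g | f g ∈ s} * Fintype.card H = #s * Fintype.card G := by
  have hfiber (y : H) : #{g | f g = y} = #{g | f g = 0} :=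
    AddMonoidHom.card_fiber_eq_of_mem_range f (hf y) (hf 0)
  have hG : Fintype.card G = Fintype.card H * #{g | f g = 0} := by
    rw [← card_univ, card_eq_sum_card_fiberwise (f := f) (t := univ) (fun _ _ => mem_univ _)]
    simp [hfiber]
  have hpre : #{g | f g ∈ s} = ∑ y ∈ s, #{g | f g = y} := by
    rw [card_eq_sum_card_fiberwise (f := f) (t := s) (fun g hg => by simpa using hg)]
    refine sum_congr rfl fun y hy => congrArg card ?_
    ext g
    simp only [mem_filter, mem_univ, true_and]
    exact ⟨And.right, fun hg => ⟨hg ▸ hy, hg⟩⟩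
  simp [hpre, hG, hfiber, mul_comm, mul_left_comm]

lemma ZMod.card_filter_castHom_mul_self_le {p : ℕ} [Fact p.Prime] (hodd : Odd p) {m n : ℕ}
    (h : m ≤ n) {t : ZMod (p ^ n)} (ht : IsUnit t) :
    #{x : ZMod (p ^ n) | castHom (pow_dvd_pow p h) (ZMod (p ^ m)) x *
      castHom (pow_dvd_pow p h) (ZMod (p ^ m)) x = castHom (pow_dvd_pow p h) (ZMod (p ^ m)) t}
      ≤ 2 * p ^ (n - m) := by
  set π := castHom (pow_dvd_pow p h) (ZMod (p ^ m))
  have hcount := AddMonoidHom.card_filter_mem_mul_card π (ZMod.castHom_surjective _)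
    {y | y * y = π t}
  have hroots := ZMod.card_filter_mul_self_eq_le_two hodd (ht.map π)
  simp only [mem_filter_univ, ZMod.card] at hcount
  have hpm : 0 < p ^ m := NeZero.pos _
  refine Nat.le_of_mul_le_mul_right (c := p ^ m) ?_ hpm
  rw [hcount, mul_assoc, ← pow_add, Nat.sub_add_cancel h]
  exact Nat.mul_le_mul_right _ hroots

lemma two_mul_pow_sub_half_le_rpow {p : ℝ} (hp : 2 ≤ p) (n : ℕ) :
    (p ^ n)⁻¹ * (2 * p ^ (n - n / 2)) ≤ p ^ ((2 : ℝ) - n / 2) := by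
  have hp0 : 0 < p := by linarith
  have hsplit : p ^ n = p ^ (n - n / 2) * p ^ (n / 2) := by
    rw [← pow_add, Nat.sub_add_cancel (Nat.div_le_self n 2)]
  have hhalf : (n : ℝ) ≤ 2 * ((n / 2 : ℕ) : ℝ) + 1 := by
    exact_mod_cast (by omega : n ≤ 2 * (n / 2) + 1)
  have hcancel : (p ^ n)⁻¹ * (2 * p ^ (n - n / 2)) = 2 / p ^ (n / 2) := by
    rw [hsplit]
    field_simp
  rw [hcancel, div_le_iff₀ (by positivity), ← Real.rpow_natCast, ← Real.rpow_add hp0]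
  calc (2 : ℝ) ≤ p ^ (1 : ℝ) := by rwa [Real.rpow_one]
    _ ≤ p ^ ((2 : ℝ) - n / 2 + (n / 2 : ℕ)) :=
      Real.rpow_le_rpow_of_exponent_le (by linarith) (by linarith)

/-- the paper's Lemma 3.5: for an odd prime `p` and `⌈n/2⌉ ≥ n₀ ≥ 1`, and all
units `c, d` of `ℤ/p^nℤ`,
`|(1/p^n)·Σ_{a ≡ c (p^{n₀})} e((a + a^{−1}d)/p^n)| ≤ p^{2 − n/2}`. -/
theorem stmt_4 (p n n₀ : ℕ) [hp : Fact p.Prime] (hodd : Odd p)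
    (hn : n₀ ≤ (n + 1) / 2)
    (c d : (ZMod (p ^ n))ˣ) :
    ‖((p : ℂ) ^ n)⁻¹ *
      ∑ a ∈ Finset.univ.filter (fun a : (ZMod (p ^ n))ˣ =>
          ZMod.castHom (pow_dvd_pow p (by omega : n₀ ≤ n)) (ZMod (p ^ n₀)) (a : ZMod (p ^ n)) =
          ZMod.castHom (pow_dvd_pow p (by omega : n₀ ≤ n)) (ZMod (p ^ n₀)) (c : ZMod (p ^ n))),
        e ((((a : ZMod (p ^ n)) + ((a⁻¹ * d : (ZMod (p ^ n))ˣ) : ZMod (p ^ n))).val : ℚ) /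
          (p ^ n : ℚ))‖
    ≤ (p : ℝ) ^ ((2 : ℝ) - (n : ℝ) / 2) := by
  set k := n - n / 2
  have hkm : p ^ k * p ^ (n / 2) = p ^ n := by rw [← pow_add]; congr 1; omega
  set π₀ := ZMod.castHom (pow_dvd_pow p (by omega : n₀ ≤ n)) (ZMod (p ^ n₀))
  set A : Finset (ZMod (p ^ n)) := {x | IsUnit x ∧ π₀ x = π₀ c}
  set t : ZMod (p ^ n) := ((p ^ k : ℕ) : ZMod (p ^ n))
  have htt : t * t = 0 := by
    rw [← Nat.cast_mul, ← pow_add, ZMod.natCast_eq_zero_iff]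
    exact pow_dvd_pow p (by omega)
  have hA (x u : ZMod (p ^ n)) : x + t * u ∈ A ↔ x ∈ A := by
    have hnil : IsNilpotent (t * u) := ⟨2, by linear_combination u ^ 2 * htt⟩
    have hπt : π₀ t = 0 := by
      rw [map_natCast, ZMod.natCast_eq_zero_iff]
      exact pow_dvd_pow p (by omega)
    simp [A, hnil.isUnit_add_left_iff, hπt]
  simp only [← Nat.cast_pow (α := ℚ), e_val_div_eq_stdAddChar, Units.val_mul, ← ZMod.inv_coe_unit]
  rw [Finset.sum_filter_units (fun x => π₀ x = π₀ c)
      (fun x => ZMod.stdAddChar (x + x⁻¹ * (d : ZMod (p ^ n)))),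
    ZMod.sum_addChar_add_inv_mul_eq_sum_filter (ZMod.isPrimitive_stdAddChar _) d htt
      (fun x hx => (mem_filter.mp hx).2.1) hA]
  set π := ZMod.castHom (pow_dvd_pow p (Nat.div_le_self n 2)) (ZMod (p ^ (n / 2)))
  have hroots : {x ∈ A | t * (1 - x⁻¹ ^ 2 * d) = 0} ⊆ ({x | π x * π x = π d} : Finset _) := by
    intro x hx
    simp only [A, mem_filter, mem_univ, true_and] at hx ⊢
    exact ZMod.castHom_mul_self_eq_of_natCast_mul_eq_zero (pow_ne_zero k hp.out.ne_zero) hkm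
      hx.1.1 hx.2
  rw [norm_mul, norm_inv, norm_pow, Complex.norm_natCast]
  calc ((p : ℝ) ^ n)⁻¹ * ‖_‖ ≤ ((p : ℝ) ^ n)⁻¹ * (2 * p ^ k) := by
        gcongr
        refine (norm_sum_le _ _).trans ?_
        simp only [AddChar.norm_apply, sum_const, nsmul_eq_mul, mul_one]
        exact_mod_cast (card_le_card hroots).trans
          (ZMod.card_filter_castHom_mul_self_le hodd (Nat.div_le_self n 2) d.isUnit)
    _ ≤ (p : ℝ) ^ ((2 : ℝ) - (n : ℝ) / 2) :=
        two_mul_pow_sub_half_le_rpow (by exact_mod_cast hp.out.two_le) n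
end
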